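/- The function L_n(Ω_yy, Ω_yx) = −ln det(Ω_yy) + ⟨⟨S_yy, Ω_yy⟩⟩ + 2⟨⟨S_yx, Ω_yx⟩⟩ + ⟨⟨S_xx, Ω_yxᵗ Ω_yy^{-1} Ω_yx⟩⟩ + η⟨⟨L, Ω_yxᵗ Ω_yy^{-1} Ω_yx⟩⟩^β + λ|Ω_yy|₁⁻ + μ|Ω_yx|₁ is jointly convex in (Ω_yy, Ω_yx) on S₊₊^q × ℝ^{q×p}, for any β ≥ 1, η, λ, μ ≥ 0, symmetric positive semi-definite matrices S_yy, S_xx, L, and arbitrary S_yx. -/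

import Mathlib

/-!
Every summand is convex on `S₊₊ × ℝ^{q×p}`; only two need an idea.

`log det` is concave because of the tangent-plane inequality
`log det X + log det A ≤ tr (X A) - n` for `X, A ≻ 0` (write `X = Yᴴ Y` and apply `log λ ≤ λ - 1`
to the eigenvalues of `Y A Yᴴ`), which is an equality at `X = A⁻¹`.

`Qᵀ P⁻¹ Q` is convex for the Loewner order: by the Schur complement criterion it is the least `D`
making `[[P, Q], [Qᵀ, D]]` positive semidefinite, and that condition survives convex combinations.
Composing with the monotone linear form `⟨⟨S, ·⟩⟩` (`S ⪰ 0`), then with the increasing convex map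
`x ↦ x ^ β` on `[0, ∞)`, keeps convexity.
-/

open Matrix

noncomputable def fip {m n : ℕ} (A B : Matrix (Fin m) (Fin n) ℝ) : ℝ := (Aᵀ * B).trace

noncomputable def l1norm {m n : ℕ} (A : Matrix (Fin m) (Fin n) ℝ) : ℝ :=
  ∑ i, ∑ j, |A i j|

noncomputable def l1minus {q : ℕ} (A : Matrix (Fin q) (Fin q) ℝ) : ℝ :=
  ∑ i, ∑ j, if i = j then 0 else |A i j|

open Set Real

open scoped ComplexOrder MatrixOrder

theorem ConvexOn.comp_of_mapsTo {𝕜 E α β : Type*} [Semiring 𝕜] [PartialOrder 𝕜]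
    [AddCommMonoid E] [AddCommMonoid α] [PartialOrder α] [AddCommMonoid β] [PartialOrder β]
    [SMul 𝕜 E] [SMul 𝕜 α] [SMul 𝕜 β] {s : Set E} {t : Set β} {f : E → β} {g : β → α}
    (hg : ConvexOn 𝕜 t g) (hf : ConvexOn 𝕜 s f) (hg' : MonotoneOn g t) (hst : MapsTo f s t) :
    ConvexOn 𝕜 s (g ∘ f) :=
  ⟨hf.1, fun _ hx _ hy _ _ ha hb hab =>
    (hg' (hst (hf.1 hx hy ha hb hab)) (hg.1 (hst hx) (hst hy) ha hb hab)
      (hf.2 hx hy ha hb hab)).trans (hg.2 (hst hx) (hst hy) ha hb hab)⟩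

namespace Matrix

theorem convex_setOf_posDef {𝕜 m : Type*} [RCLike 𝕜] : Convex ℝ {A : Matrix m m 𝕜 | A.PosDef} := by
  intro A hA B hB a b ha hb hab
  rcases ha.eq_or_lt with rfl | ha
  · simpa [show b = 1 by linarith] using hB
  exact (hA.smul ha).add_posSemidef (hB.posSemidef.smul hb)

section RCLike

variable {𝕜 m n : Type*} [RCLike 𝕜] [Fintype m] [Fintype n]

theorem PosSemidef.trace_mul_nonneg {A B : Matrix n n 𝕜} (hA : A.PosSemidef) (hB : B.PosSemidef) :
    0 ≤ (A * B).trace := by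
  classical
  obtain ⟨X, rfl⟩ := CStarAlgebra.nonneg_iff_eq_star_mul_self.mp hB.nonneg
  rw [← Matrix.mul_assoc, trace_mul_cycle, star_eq_conjTranspose]
  exact (hA.mul_mul_conjTranspose_same X).trace_nonneg

theorem convexOn_conjTranspose_mul_inv_mul [DecidableEq m] :
    ConvexOn ℝ {x : Matrix m m 𝕜 × Matrix m n 𝕜 | x.1.PosDef} fun x => x.2ᴴ * x.1⁻¹ * x.2 := by
  refine ⟨fun x hx y hy a b ha hb hab => convex_setOf_posDef hx hy ha hb hab, ?_⟩
  rintro ⟨P₁, Q₁⟩ (hP₁ : P₁.PosDef) ⟨P₂, Q₂⟩ (hP₂ : P₂.PosDef) a b ha hb hab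
  have hblock : ∀ {P : Matrix m m 𝕜} (Q : Matrix m n 𝕜), P.PosDef →
      (fromBlocks P Q Qᴴ (Qᴴ * P⁻¹ * Q)).PosSemidef := fun Q hP => by
    have := hP.isUnit.invertible
    simpa using (PosDef.fromBlocks₁₁ Q (Qᴴ * _ * Q) hP).2 (by simpa using PosSemidef.zero)
  have hP : (a • P₁ + b • P₂).PosDef := convex_setOf_posDef hP₁ hP₂ ha hb hab
  have := hP.isUnit.invertible
  have hmix := ((hblock Q₁ hP₁).smul ha).add ((hblock Q₂ hP₂).smul hb)
  refine (PosDef.fromBlocks₁₁ (a • Q₁ + b • Q₂) _ hP).1 ?_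
  simpa [conjTranspose_smul, fromBlocks_smul, fromBlocks_add] using hmix

end RCLike

section LogDet

variable {n : Type*} [Fintype n] [DecidableEq n]

theorem PosDef.log_det_le_trace_sub_card {M : Matrix n n ℝ} (hM : M.PosDef) :
    log M.det ≤ M.trace - Fintype.card n := by
  have hpos_eig := hM.eigenvalues_pos
  rw [hM.1.det_eq_prod_eigenvalues, hM.1.trace_eq_sum_eigenvalues]
  simp only [RCLike.ofReal_real_eq_id, id]
  rw [log_prod fun i _ => (hpos_eig i).ne', Fintype.card_eq_sum_ones, Nat.cast_sum, Nat.cast_one,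
    ← Finset.sum_sub_distrib]
  exact Finset.sum_le_sum fun i _ => log_le_sub_one_of_pos (hpos_eig i)

theorem PosDef.log_det_add_log_det_le_trace_mul {A X : Matrix n n ℝ} (hA : A.PosDef)
    (hX : X.PosDef) : log X.det + log A.det ≤ (X * A).trace - Fintype.card n := by
  obtain ⟨Y, hY, rfl⟩ := CStarAlgebra.isStrictlyPositive_iff_eq_star_mul_self.mp
    hX.isStrictlyPositive
  have hYAY : (Y * A * Yᴴ).PosDef :=
    hA.mul_mul_conjTranspose_same (vecMul_injective_iff_isUnit.mpr hY)
  have hdet : (Y * A * Yᴴ).det = (star Y * Y).det * A.det := by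
    simp only [det_mul, det_conjTranspose, star_eq_conjTranspose]; ring
  have htr : (Y * A * Yᴴ).trace = (star Y * Y * A).trace := by
    rw [trace_mul_cycle, star_eq_conjTranspose, Matrix.mul_assoc]
  have hpos : 0 < (star Y * Y).det := hX.det_pos
  rw [← log_mul hpos.ne' hA.det_pos.ne', ← hdet, ← htr]
  exact hYAY.log_det_le_trace_sub_card

theorem concaveOn_log_det : ConcaveOn ℝ {A : Matrix n n ℝ | A.PosDef} fun A => log A.det := by
  refine ⟨convex_setOf_posDef, fun A hA B hB a b ha hb hab => ?_⟩
  set P := a • A + b • B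
  have hP : P.PosDef := convex_setOf_posDef hA hB ha hb hab
  have h1 := PosDef.log_det_add_log_det_le_trace_mul hA hP.inv
  have h2 := PosDef.log_det_add_log_det_le_trace_mul hB hP.inv
  have htr : (P⁻¹ * P).trace = Fintype.card n := by
    rw [nonsing_inv_mul _ hP.det_pos.ne'.isUnit, trace_one]
  rw [det_nonsing_inv, Ring.inverse_eq_inv', log_inv] at h1 h2
  rw [Matrix.mul_add, Matrix.mul_smul, Matrix.mul_smul, trace_add, trace_smul, trace_smul] at htr
  simp only [smul_eq_mul] at htr
  linear_combination a * h1 + b * h2 + htr + (log P.det - Fintype.card n) * hab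

end LogDet

theorem convexOn_sum_sum_apply {m n : Type*} [Fintype m] [Fintype n] {g : m → n → ℝ → ℝ}
    (hg : ∀ i j, ConvexOn ℝ univ (g i j)) :
    ConvexOn ℝ univ fun A : Matrix m n ℝ => ∑ i, ∑ j, g i j (A i j) := by
  refine ⟨convex_univ, fun A _ B _ a b ha hb hab => ?_⟩
  simp only [add_apply, smul_apply, smul_eq_mul, Finset.mul_sum, ← Finset.sum_add_distrib]
  gcongr with i _ j _
  exact (hg i j).2 trivial trivial ha hb hab

end Matrix

section Objective

variable {m n : ℕ}

noncomputable def fipLinearMap (S : Matrix (Fin m) (Fin n) ℝ) :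
    Matrix (Fin m) (Fin n) ℝ →ₗ[ℝ] ℝ where
  toFun := fip S
  map_add' A B := by simp [fip, Matrix.mul_add]
  map_smul' c A := by simp [fip]

theorem fip_nonneg {S M : Matrix (Fin m) (Fin m) ℝ} (hS : S.PosSemidef) (hM : M.PosSemidef) :
    0 ≤ fip S M := by
  rw [fip, ← conjTranspose_eq_transpose_of_trivial, hS.1.eq]
  exact hS.trace_mul_nonneg hM

theorem fip_mono {S : Matrix (Fin m) (Fin m) ℝ} (hS : S.PosSemidef) : Monotone (fip S) :=
  fun A B hAB => sub_nonneg.mp <| by simpa [fip, Matrix.mul_sub] using fip_nonneg hS hAB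

theorem convexOn_l1norm : ConvexOn ℝ univ (l1norm : Matrix (Fin m) (Fin n) ℝ → ℝ) :=
  Matrix.convexOn_sum_sum_apply (g := fun _ _ x => |x|) fun _ _ => convexOn_norm convex_univ

theorem convexOn_l1minus : ConvexOn ℝ univ (l1minus : Matrix (Fin m) (Fin m) ℝ → ℝ) :=
  Matrix.convexOn_sum_sum_apply (g := fun i j x => if i = j then 0 else |x|) fun i j => by
    by_cases h : i = j
    · simpa only [h, if_true] using convexOn_const (0 : ℝ) convex_univ
    · simp only [h, if_false]
      exact convexOn_norm convex_univ

abbrev posDefProd (m n : ℕ) : Set (Matrix (Fin m) (Fin m) ℝ × Matrix (Fin m) (Fin n) ℝ) :=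
  {x | x.1.PosDef}

theorem convexOn_transpose_mul_inv_mul :
    ConvexOn ℝ (posDefProd m n) fun x => x.2ᵀ * x.1⁻¹ * x.2 := by
  simpa only [conjTranspose_eq_transpose_of_trivial] using
    Matrix.convexOn_conjTranspose_mul_inv_mul (𝕜 := ℝ) (m := Fin m) (n := Fin n)

theorem convexOn_fip_transpose_mul_inv_mul {S : Matrix (Fin n) (Fin n) ℝ} (hS : S.PosSemidef) :
    ConvexOn ℝ (posDefProd m n) fun x => fip S (x.2ᵀ * x.1⁻¹ * x.2) :=
  ((fipLinearMap S).convexOn convex_univ).comp_of_mapsTo convexOn_transpose_mul_inv_mul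
    ((fip_mono hS).monotoneOn _) (mapsTo_univ _ _)

theorem convexOn_rpow_fip_transpose_mul_inv_mul {S : Matrix (Fin n) (Fin n) ℝ}
    (hS : S.PosSemidef) {β : ℝ} (hβ : 1 ≤ β) :
    ConvexOn ℝ (posDefProd m n) fun x => Real.rpow (fip S (x.2ᵀ * x.1⁻¹ * x.2)) β :=
  (convexOn_rpow hβ).comp_of_mapsTo (convexOn_fip_transpose_mul_inv_mul hS)
    (monotoneOn_rpow_Ici_of_exponent_nonneg (by linarith))
    fun x hx => fip_nonneg hS (by simpa using hx.inv.posSemidef.conjTranspose_mul_mul_same x.2)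

end Objective

theorem objective_jointly_convex_general {q p : ℕ}
    (Syy : Matrix (Fin q) (Fin q) ℝ) (Syx : Matrix (Fin q) (Fin p) ℝ)
    (Sxx : Matrix (Fin p) (Fin p) ℝ) (L : Matrix (Fin p) (Fin p) ℝ)
    (hSxx : Sxx.PosSemidef) (hL : L.PosSemidef)
    (β η lam mu : ℝ) (hβ : 1 ≤ β) (hη : 0 ≤ η) (hlam : 0 ≤ lam) (hmu : 0 ≤ mu)
    (f : Matrix (Fin q) (Fin q) ℝ → Matrix (Fin q) (Fin p) ℝ → ℝ)
    (hf : ∀ P Q, f P Q = -Real.log P.det + fip Syy P + 2 * fip Syx Q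
        + fip Sxx (Qᵀ * P⁻¹ * Q) + η * Real.rpow (fip L (Qᵀ * P⁻¹ * Q)) β
        + lam * l1minus P + mu * l1norm Q) :
    ∀ (P₁ P₂ : Matrix (Fin q) (Fin q) ℝ) (Q₁ Q₂ : Matrix (Fin q) (Fin p) ℝ),
      P₁.PosDef → P₂.PosDef → ∀ t : ℝ, 0 ≤ t → t ≤ 1 →
        f (t • P₁ + (1 - t) • P₂) (t • Q₁ + (1 - t) • Q₂)
          ≤ t * f P₁ Q₁ + (1 - t) * f P₂ Q₂ := by
  intro P₁ P₂ Q₁ Q₂ hP₁ hP₂ t ht₀ ht₁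
  have hD : Convex ℝ (posDefProd q p) := convexOn_transpose_mul_inv_mul.1
  have hlogdet : ConvexOn ℝ (posDefProd q p) fun x => -log x.1.det :=
    Matrix.concaveOn_log_det.neg.comp_linearMap (LinearMap.fst ℝ _ _)
  have hlin : ConvexOn ℝ (posDefProd q p) fun x => fip Syy x.1 + 2 * fip Syx x.2 :=
    ((fipLinearMap Syy ∘ₗ LinearMap.fst ℝ _ _) +
      (2 : ℝ) • (fipLinearMap Syx ∘ₗ LinearMap.snd ℝ _ _)).convexOn hD
  have hl1 : ConvexOn ℝ (posDefProd q p) fun x => lam * l1minus x.1 + mu * l1norm x.2 :=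
    ((convexOn_l1minus.smul hlam).comp_linearMap (LinearMap.fst ℝ _ _)).add
      ((convexOn_l1norm.smul hmu).comp_linearMap (LinearMap.snd ℝ _ _)) |>.subset (subset_univ _) hD
  have hquad := convexOn_fip_transpose_mul_inv_mul (m := q) hSxx
  have hpow := (convexOn_rpow_fip_transpose_mul_inv_mul (m := q) hL hβ).smul hη
  have hconv : ConvexOn ℝ (posDefProd q p) fun x => f x.1 x.2 :=
    ((((hlogdet.add hlin).add hquad).add hpow).add hl1).congr fun x _ => by
      simp only [Pi.add_apply, smul_eq_mul, hf]
      ring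
  exact hconv.2 (x := (P₁, Q₁)) hP₁ (y := (P₂, Q₂)) hP₂ ht₀ (sub_nonneg.2 ht₁)
    (add_sub_cancel t 1)

theorem objective_jointly_convex {q p : ℕ}
    (Syy : Matrix (Fin q) (Fin q) ℝ) (Syx : Matrix (Fin q) (Fin p) ℝ)
    (Sxx : Matrix (Fin p) (Fin p) ℝ) (L : Matrix (Fin p) (Fin p) ℝ)
    (hSyy : Syy.PosSemidef) (hSxx : Sxx.PosSemidef) (hL : L.PosSemidef)
    (β η lam mu : ℝ) (hβ : 1 ≤ β) (hη : 0 ≤ η) (hlam : 0 ≤ lam) (hmu : 0 ≤ mu)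
    (f : Matrix (Fin q) (Fin q) ℝ → Matrix (Fin q) (Fin p) ℝ → ℝ)
    (hf : ∀ P Q, f P Q = -Real.log P.det + fip Syy P + 2 * fip Syx Q
        + fip Sxx (Qᵀ * P⁻¹ * Q) + η * Real.rpow (fip L (Qᵀ * P⁻¹ * Q)) β
        + lam * l1minus P + mu * l1norm Q) :
    ∀ (P₁ P₂ : Matrix (Fin q) (Fin q) ℝ) (Q₁ Q₂ : Matrix (Fin q) (Fin p) ℝ),
      P₁.PosDef → P₂.PosDef → ∀ t : ℝ, 0 ≤ t → t ≤ 1 →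
        f (t • P₁ + (1 - t) • P₂) (t • Q₁ + (1 - t) • Q₂)
          ≤ t * f P₁ Q₁ + (1 - t) * f P₂ Q₂ :=
  objective_jointly_convex_general Syy Syx Sxx L hSxx hL β η lam mu hβ hη hlam hmu f hf
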